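/- Let F_q be a finite field of characteristic p with q elements, K a field extension of F_q of degree m, and l ≥ 1. Let C_1, C_2 ⊆ K^l, and suppose there exist α ∈ K^×, L ∈ GL_l(F_q), and γ ∈ Gal(K/F_p) such that C_2 = {γ-applied-coordinatewise to α·(x·L) : x ∈ C_1}. Then for every ordered F_q-basis b of K, there exists an invertible, rank-preserving, F_q-semi-linear map g : F_q^{l×m} → F_q^{l×m} with g(ε_b(C_1)) = ε_b(C_2); that is, ε_b(C_1) and ε_b(C_2) are semi-linearly matrix equivalent. -/

import Mathlib

/-!
The map `x ↦ γ (α • (x ᵥ* L))` on `K^l` is additive and bijective, and it is `δ`-semilinear over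
`F`, where `δ` is the restriction of `γ` to `F`: `γ` preserves `F ⊆ K` because `F` is the set of
roots of `X ^ q - X`. The rank of `ε_b(x)` is the dimension of the `F`-span of the entries of `x`.
Right multiplication by `L` acts on `ε_b(x)` as left multiplication by the invertible `Lᵀ`, and
the semilinear bijection `y ↦ γ (α • y)` of `K` maps the span of the entries onto a space of
the same dimension; so conjugating the map by `ε_b` gives the required `g`.
-/

open Matrix
open scoped MatrixGroups

/-- Matrix expansion with respect to an ordered basis `b` of `K` over `F`. -/
noncomputable def expand {F K : Type*} [Field F] [Field K] [Algebra F K] {m l : ℕ}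
    (b : Module.Basis (Fin m) F K) (x : Fin l → K) : Matrix (Fin l) (Fin m) F :=
  Matrix.of fun i j => b.repr (x i) j

open Polynomial in
theorem FiniteField.mem_range_algebraMap_iff {F K : Type*} [Field F] [Fintype F] [CommRing K]
    [IsDomain K] [Algebra F K] {x : K} :
    x ∈ Set.range (algebraMap F K) ↔ x ^ Fintype.card F = x := by
  constructor
  · rintro ⟨c, rfl⟩
    rw [← map_pow, FiniteField.pow_card]
  · intro hx
    have hq : 1 < Fintype.card F := Fintype.one_lt_card
    have hsplits : (X ^ Fintype.card F - X : F[X]).Splits := by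
      rw [splits_iff_card_roots, FiniteField.roots_X_pow_card_sub_X,
        FiniteField.X_pow_card_sub_X_natDegree_eq F hq]
      rfl
    refine hsplits.mem_range_of_isRoot (FiniteField.X_pow_card_sub_X_ne_zero F hq) ?_
    simp [hx]

theorem FiniteField.exists_ringEquiv_algebraMap_comm {F K : Type*} [Field F] [Fintype F]
    [Field K] [Algebra F K] (γ : K ≃+* K) :
    ∃ δ : F ≃+* F, ∀ c, algebraMap F K (δ c) = γ (algebraMap F K c) := by
  have hmem (c : F) : γ (algebraMap F K c) ∈ (algebraMap F K).fieldRange := by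
    rw [RingHom.mem_fieldRange, ← Set.mem_range, FiniteField.mem_range_algebraMap_iff,
      ← map_pow, ← map_pow, FiniteField.pow_card]
  let e := RingEquiv.ofBijective _ (algebraMap F K).rangeRestrictField_bijective
  let δ : F →+* F :=
    e.symm.toRingHom.comp (((γ : K →+* K).comp (algebraMap F K)).codRestrict _ hmem)
  refine ⟨.ofBijective δ (Finite.injective_iff_bijective.mp δ.injective), fun c => ?_⟩
  exact congrArg Subtype.val (e.apply_symm_apply _)

def RingEquiv.toSemilinearEquivOfAlgebraMap {F F' K K' : Type*} [CommSemiring F]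
    [CommSemiring F'] [Semiring K] [Semiring K'] [Algebra F K] [Algebra F' K']
    {σ : F →+* F'} {σ' : F' →+* F} [RingHomInvPair σ σ'] [RingHomInvPair σ' σ] (γ : K ≃+* K')
    (h : ∀ c, algebraMap F' K' (σ c) = γ (algebraMap F K c)) : K ≃ₛₗ[σ] K' :=
  { γ with map_smul' := fun c x => by simp [Algebra.smul_def, h] }

theorem LinearEquiv.finrank_map_eq_of_semilinear {R S M N : Type*} [Ring R] [Ring S]
    [AddCommGroup M] [AddCommGroup N] [Module R M] [Module S N]
    {σ : R →+* S} {σ' : S →+* R} [RingHomInvPair σ σ'] [RingHomInvPair σ' σ]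
    (e : M ≃ₛₗ[σ] N) (p : Submodule R M) :
    Module.finrank S (p.map (e : M →ₛₗ[σ] N)) = Module.finrank R p := by
  have hσ : Function.Bijective σ := (RingHomInvPair.toRingEquiv σ σ').bijective
  have := lift_rank_eq_of_equiv_equiv σ (e.submoduleMap p).toAddEquiv hσ
    (e.submoduleMap p).map_smulₛₗ
  simpa [Module.finrank] using (congrArg Cardinal.toNat this).symm

def Matrix.vecMulAddEquiv {n R : Type*} [Fintype n] [DecidableEq n] [CommRing R] (P : GL n R) :
    (n → R) ≃+ (n → R) where
  toFun x := x ᵥ* P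
  invFun x := x ᵥ* ↑P⁻¹
  left_inv x := by simp [vecMul_vecMul]
  right_inv x := by simp [vecMul_vecMul]
  map_add' x y := add_vecMul (P : Matrix n n R) x y

section Expansion

variable {F K : Type*} [Field F] [Field K] [Algebra F K] {m l : ℕ}

noncomputable def expandEquiv (b : Module.Basis (Fin m) F K) :
    (Fin l → K) ≃ₗ[F] Matrix (Fin l) (Fin m) F :=
  LinearEquiv.piCongrRight fun _ => b.equivFun

theorem rank_expand (b : Module.Basis (Fin m) F K) (x : Fin l → K) :
    (expand b x).rank = Module.finrank F (Submodule.span F (Set.range x)) := by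
  rw [rank_eq_finrank_span_row, show (expand b x).row = b.equivFun ∘ x from rfl, Set.range_comp,
    ← LinearEquiv.coe_coe, ← Submodule.map_span, LinearEquiv.finrank_map_eq]

theorem rank_expand_comp_semilinearEquiv {F' K' : Type*} [Field F'] [Field K'] [Algebra F' K']
    {m' : ℕ} {σ : F →+* F'} {σ' : F' →+* F} [RingHomInvPair σ σ'] [RingHomInvPair σ' σ]
    (b : Module.Basis (Fin m) F K) (b' : Module.Basis (Fin m') F' K') (u : K ≃ₛₗ[σ] K')
    (x : Fin l → K) : (expand b' (u ∘ x)).rank = (expand b x).rank := by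
  rw [rank_expand, rank_expand, Set.range_comp, ← LinearEquiv.coe_coe, ← Submodule.map_span,
    LinearEquiv.finrank_map_eq_of_semilinear]

theorem expand_vecMul_map (b : Module.Basis (Fin m) F K) (x : Fin l → K)
    (P : Matrix (Fin l) (Fin l) F) :
    expand b (x ᵥ* P.map (algebraMap F K)) = Pᵀ * expand b x := by
  ext i j
  simp [expand, vecMul, dotProduct, Matrix.mul_apply, mul_comm _ (algebraMap F K _),
    ← Algebra.smul_def]

theorem rank_expand_vecMul_map (b : Module.Basis (Fin m) F K) (x : Fin l → K)
    (L : GL (Fin l) F) :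
    (expand b (x ᵥ* (L : Matrix (Fin l) (Fin l) F).map (algebraMap F K))).rank
      = (expand b x).rank := by
  rw [expand_vecMul_map]
  exact rank_mul_eq_right_of_isUnit_det _ _ (by rw [det_transpose]; exact isUnits_det_units L)

end Expansion

theorem expanded_codes_of_semilinear_rank_metric_equivalent_general
    {F K : Type*} [Field F] [Fintype F] [Field K] [Algebra F K] {m l : ℕ}
    (C₁ C₂ : Set (Fin l → K)) (α : Kˣ) (L : GL (Fin l) F) (γ : K ≃+* K)
    (hC : C₂ = (fun x => fun i =>
        γ ((α : K) • Matrix.vecMul x ((L : Matrix (Fin l) (Fin l) F).map (algebraMap F K)) i)) '' C₁)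
    (b : Module.Basis (Fin m) F K) :
    ∃ g : Matrix (Fin l) (Fin m) F ≃+ Matrix (Fin l) (Fin m) F,
      (∃ δ : F ≃+* F, ∀ (c : F) (A : Matrix (Fin l) (Fin m) F), g (c • A) = δ c • g A) ∧
      (∀ A, (g A).rank = A.rank) ∧
      ⇑g '' (expand b '' C₁) = expand b '' C₂ := by
  obtain ⟨δ, hδ⟩ := FiniteField.exists_ringEquiv_algebraMap_comm (F := F) γ
  have := RingHomInvPair.of_ringEquiv δ
  have := RingHomInvPair.of_ringEquiv_symm δ
  let u : K ≃ₛₗ[(δ : F →+* F)] K :=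
    (DistribMulAction.toLinearEquiv F K α).trans (γ.toSemilinearEquivOfAlgebraMap hδ)
  let Φ : (Fin l → K) ≃+ (Fin l → K) :=
    (vecMulAddEquiv (GeneralLinearGroup.map (algebraMap F K) L)).trans
      (AddEquiv.piCongrRight fun _ => u.toAddEquiv)
  have hΦ (c : F) (x : Fin l → K) : Φ (c • x) = δ c • Φ x := by
    ext i
    show u (((c • x) ᵥ* _) i) = δ c • u ((x ᵥ* _) i)
    rw [smul_vecMul, Pi.smul_apply, map_smulₛₗ]
    rfl
  let E := expandEquiv (l := l) b
  refine ⟨E.symm.toAddEquiv.trans (Φ.trans E.toAddEquiv), ⟨δ, fun c A => ?_⟩, fun A => ?_, ?_⟩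
  · show E (Φ (E.symm (c • A))) = δ c • E (Φ (E.symm A))
    rw [map_smul, hΦ, map_smulₛₗ]
    rfl
  · obtain ⟨x, rfl⟩ := E.surjective A
    show (expand b (Φ (E.symm (E x)))).rank = (expand b x).rank
    rw [E.symm_apply_apply]
    exact (rank_expand_comp_semilinearEquiv b b u _).trans (rank_expand_vecMul_map b x L)
  · rw [hC, Set.image_image, Set.image_image]
    refine Set.image_congr fun x _ => ?_
    show E (Φ (E.symm (E x))) = _
    rw [E.symm_apply_apply]
    rfl

/-- **Semi-linear rank-metric equivalence yields semi-linear matrix equivalence of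
expansions.**  If `C₂` is the image of `C₁` under `x ↦ (α • (x · L))^γ` with `α ∈ K^×`,
`L ∈ GL_l(F)` and `γ ∈ Gal(K/F_p)`, then for every ordered `F`-basis `b` of `K` there is
an invertible, rank-preserving, `F`-semi-linear map `g` on `F^{l×m}` with
`g(ε_b(C₁)) = ε_b(C₂)`. -/
theorem expanded_codes_of_semilinear_rank_metric_equivalent
    {F K : Type*} [Field F] [Fintype F] [Field K] [Fintype K] [Algebra F K]
    (p : ℕ) [Fact p.Prime] [CharP F p] {m l : ℕ}
    (hm : Module.finrank F K = m) (hl : 1 ≤ l)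
    (C₁ C₂ : Set (Fin l → K)) (α : Kˣ) (L : GL (Fin l) F) (γ : K ≃+* K)
    (hC : C₂ = (fun x => fun i =>
        γ ((α : K) • Matrix.vecMul x ((L : Matrix (Fin l) (Fin l) F).map (algebraMap F K)) i)) '' C₁)
    (b : Module.Basis (Fin m) F K) :
    ∃ g : Matrix (Fin l) (Fin m) F ≃+ Matrix (Fin l) (Fin m) F,
      (∃ δ : F ≃+* F, ∀ (c : F) (A : Matrix (Fin l) (Fin m) F), g (c • A) = δ c • g A) ∧
      (∀ A, (g A).rank = A.rank) ∧
      ⇑g '' (expand b '' C₁) = expand b '' C₂ :=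
  expanded_codes_of_semilinear_rank_metric_equivalent_general C₁ C₂ α L γ hC b
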